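/- If X supports a semilocal (q,p)-Poincaré inequality, then so does its completion X̂ (with the extended measure). -/

import Mathlib

open Metric MeasureTheory Set Filter UniformSpace
open scoped ENNReal NNReal Topology

noncomputable section

namespace Paper

universe u

/-- A nonconstant compact rectifiable curve in `X`, parameterized by arc length,
regarded as a `1`-Lipschitz map on `[0, len]`. -/
structure Curve (X : Type u) [MetricSpace X] where
  len : ℝ
  len_pos : 0 < len
  toFun : ℝ → X
  lip : LipschitzOnWith 1 toFun (Set.Icc 0 len)
  nonconst : ∃ t ∈ Set.Icc (0 : ℝ) len, toFun t ≠ toFun 0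

variable {X : Type u} [MetricSpace X]

/-- The line integral `∫_γ g ds` of a nonnegative function along a curve. -/
def Curve.lineIntegral (γ : Curve X) (g : X → ℝ≥0∞) : ℝ≥0∞ :=
  ∫⁻ t in Set.Icc (0 : ℝ) γ.len, g (γ.toFun t)

/-- The curve `γ` lies in the set `E`. -/
def Curve.In (γ : Curve X) (E : Set X) : Prop :=
  ∀ t ∈ Set.Icc (0 : ℝ) γ.len, γ.toFun t ∈ E

/-- The upper gradient inequality along the curve `γ`; the left-hand side is `∞`
whenever one of the endpoint values is `±∞`. -/
def ugIneq (f : X → EReal) (g : X → ℝ≥0∞) (γ : Curve X) : Prop :=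
  (f (γ.toFun 0) - f (γ.toFun γ.len)).abs ≤ γ.lineIntegral g

variable [MeasurableSpace X]

/-- `g` is an upper gradient of `f` on `E` (with `E` regarded as a metric space
in its own right). -/
def IsUpperGradOn (f : X → EReal) (g : X → ℝ≥0∞) (E : Set X) : Prop :=
  Measurable (fun x : E => g x) ∧ ∀ γ : Curve X, γ.In E → ugIneq f g γ

/-- The curve family `Γ` has zero `p`-modulus with respect to `μ`. -/
def ZeroMod (μ : Measure X) (p : ℝ) (Γ : Set (Curve X)) : Prop :=
  ∃ ρ : X → ℝ≥0∞, Measurable ρ ∧ (∫⁻ x, ρ x ^ p ∂μ) < ∞ ∧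
    ∀ γ ∈ Γ, γ.lineIntegral ρ = ∞

/-- `g` is a `p`-weak upper gradient of `f` on `E`. -/
def IsWeakUpperGradOn (μ : Measure X) (p : ℝ) (f : X → EReal) (g : X → ℝ≥0∞)
    (E : Set X) : Prop :=
  Measurable (fun x : E => g x) ∧
    ZeroMod (μ.restrict E) p {γ : Curve X | γ.In E ∧ ¬ ugIneq f g γ}

/-- `g` is a (the a.e.-unique) minimal `p`-weak upper gradient of `f` on `E`:
a locally `L^p` `p`-weak upper gradient of `f` which is a.e. smaller than every
locally `L^p` `p`-weak upper gradient of `f` on `E`. -/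
def IsMinimalWUG (μ : Measure X) (p : ℝ) (E : Set X) (f : X → EReal)
    (g : X → ℝ≥0∞) : Prop :=
  IsWeakUpperGradOn μ p f g E ∧
  (∀ x ∈ E, ∃ r > 0, (∫⁻ y in Metric.ball x r ∩ E, g y ^ p ∂μ) < ∞) ∧
  ∀ h : X → ℝ≥0∞, IsWeakUpperGradOn μ p f h E →
    (∀ x ∈ E, ∃ r > 0, (∫⁻ y in Metric.ball x r ∩ E, h y ^ p ∂μ) < ∞) →
    ∀ᵐ x ∂(μ.restrict E), g x ≤ h x

/-- `f ∈ D^p(E)`: `f` is measurable on `E` and has an upper gradient in `L^p(E)`. -/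
def MemDp (μ : Measure X) (p : ℝ) (E : Set X) (f : X → EReal) : Prop :=
  Measurable (fun x : E => f x) ∧
    ∃ g : X → ℝ≥0∞, IsUpperGradOn f g E ∧ (∫⁻ x in E, g x ^ p ∂μ) < ∞

/-- `f ∈ N^{1,p}(E)`. -/
def MemNp (μ : Measure X) (p : ℝ) (E : Set X) (f : X → EReal) : Prop :=
  Measurable (fun x : E => f x) ∧ (∫⁻ x in E, (f x).abs ^ p ∂μ) < ∞ ∧
    ∃ g : X → ℝ≥0∞, IsUpperGradOn f g E ∧ (∫⁻ x in E, g x ^ p ∂μ) < ∞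

/-- `f ∈ N^{1,p}_loc(E)`. -/
def MemNpLoc (μ : Measure X) (p : ℝ) (E : Set X) (f : X → EReal) : Prop :=
  ∀ x ∈ E, ∃ r > 0, MemNp μ p (Metric.ball x r ∩ E) f

/-- `f ∈ D^p_loc(E)`. -/
def MemDpLoc (μ : Measure X) (p : ℝ) (E : Set X) (f : X → EReal) : Prop :=
  ∀ x ∈ E, ∃ r > 0, MemDp μ p (Metric.ball x r ∩ E) f

/-- The `p`-energy `‖f‖_{N^{1,p}(E)}^p`. -/
def npEnergy (μ : Measure X) (p : ℝ) (E : Set X) (f : X → EReal) : ℝ≥0∞ :=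
  (∫⁻ x in E, (f x).abs ^ p ∂μ) +
    ⨅ (g : X → ℝ≥0∞) (_ : IsUpperGradOn f g E), ∫⁻ x in E, g x ^ p ∂μ

/-- The Sobolev capacity `C_p^X(E)`. -/
def capacity (μ : Measure X) (p : ℝ) (E : Set X) : ℝ≥0∞ :=
  ⨅ (f : X → EReal) (_ : MemNp μ p Set.univ f) (_ : ∀ x ∈ E, f x = 1),
    npEnergy μ p Set.univ f

/-- Standing assumption: `0 < μ(B) < ∞` for all balls `B`. -/
def BallCond (μ : Measure X) : Prop :=
  ∀ (x : X) (r : ℝ), 0 < r → 0 < μ (Metric.ball x r) ∧ μ (Metric.ball x r) < ∞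

/-- `μ` is doubling within `B(x₀, r₀)`, with doubling constant `C₀`. -/
def DoublingWithin (μ : Measure X) (C₀ : ℝ≥0) (x₀ : X) (r₀ : ℝ) : Prop :=
  ∀ (x : X) (r : ℝ), 0 < r → Metric.ball x r ⊆ Metric.ball x₀ r₀ →
    μ (Metric.ball x (2 * r)) ≤ (C₀ : ℝ≥0∞) * μ (Metric.ball x r)

/-- `μ` is locally doubling. -/
def LocallyDoubling (μ : Measure X) : Prop :=
  ∀ x : X, ∃ r > 0, ∃ C₀ : ℝ≥0, DoublingWithin μ C₀ x r

/-- `μ` is semilocally doubling. -/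
def SemilocallyDoubling (μ : Measure X) : Prop :=
  ∀ (x : X) (r : ℝ), 0 < r → ∃ C₀ : ℝ≥0, DoublingWithin μ C₀ x r

/-- `μ` is globally doubling, with doubling constant `C₀`. -/
def GloballyDoubling (μ : Measure X) (C₀ : ℝ≥0) : Prop :=
  ∀ (x : X) (r : ℝ), 0 < r → DoublingWithin μ C₀ x r

/-- Integral average of a nonnegative function over a set. -/
def avg (μ : Measure X) (s : Set X) (h : X → ℝ≥0∞) : ℝ≥0∞ :=
  (∫⁻ x in s, h x ∂μ) / μ s

/-- Integral average of a real-valued function over a set. -/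
def ravg (μ : Measure X) (s : Set X) (u : X → ℝ) : ℝ := ⨍ x in s, u x ∂μ

/-- The `(q,p)`-Poincaré inequality holds within `B(x₀, r₀)`, with constants
`C` and dilation `lam`. -/
def PoincareWithin (μ : Measure X) (q p C lam : ℝ) (x₀ : X) (r₀ : ℝ) : Prop :=
  ∀ (x : X) (r : ℝ), 0 < r → Metric.ball x r ⊆ Metric.ball x₀ r₀ →
    ∀ (u : X → ℝ) (g : X → ℝ≥0∞),
      IntegrableOn u (Metric.ball x (lam * r)) μ →
      IsUpperGradOn (fun y => (u y : EReal)) g (Metric.ball x (lam * r)) →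
      (avg μ (Metric.ball x r)
          fun y => ENNReal.ofReal |u y - ravg μ (Metric.ball x r) u| ^ q) ^ (1 / q)
        ≤ ENNReal.ofReal (C * r) *
            (avg μ (Metric.ball x (lam * r)) fun y => g y ^ p) ^ (1 / p)

/-- `X` supports a local `(q,p)`-Poincaré inequality. -/
def LocalPoincare (μ : Measure X) (q p : ℝ) : Prop :=
  ∀ x : X, ∃ r > 0, ∃ C > 0, ∃ lam ≥ (1 : ℝ), PoincareWithin μ q p C lam x r

/-- `X` supports a semilocal `(q,p)`-Poincaré inequality. -/
def SemilocalPoincare (μ : Measure X) (q p : ℝ) : Prop :=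
  ∀ (x : X) (r : ℝ), 0 < r → ∃ C > 0, ∃ lam ≥ (1 : ℝ), PoincareWithin μ q p C lam x r

/-- `X` supports a global `(q,p)`-Poincaré inequality with constants `C`, `lam`. -/
def GlobalPoincare (μ : Measure X) (q p C lam : ℝ) : Prop :=
  ∀ (x : X) (r : ℝ), 0 < r → PoincareWithin μ q p C lam x r

/-- `G` is `p`-path open: for `p`-a.e. curve `γ`, the set `γ⁻¹(G)` is relatively
open in `[0, l_γ]`. -/
def PPathOpen (μ : Measure X) (p : ℝ) (G : Set X) : Prop :=
  ZeroMod μ p {γ : Curve X | ¬ ∃ U : Set ℝ, IsOpen U ∧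
    γ.toFun ⁻¹' G ∩ Set.Icc 0 γ.len = U ∩ Set.Icc 0 γ.len}

/-- `G` is `p`-path almost open: for `p`-a.e. curve `γ`, the set `γ⁻¹(G)` is the
union of a relatively open subset of `[0, l_γ]` and a set of `1`-dimensional
Hausdorff (i.e. Lebesgue) measure zero. -/
def PPathAlmostOpen (μ : Measure X) (p : ℝ) (G : Set X) : Prop :=
  ZeroMod μ p {γ : Curve X | ¬ ∃ U Z : Set ℝ, IsOpen U ∧ volume Z = 0 ∧
    Z ⊆ Set.Icc 0 γ.len ∧
    γ.toFun ⁻¹' G ∩ Set.Icc 0 γ.len = (U ∩ Set.Icc 0 γ.len) ∪ Z}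

/-- `x` is an `L^p`-Lebesgue point of `u`. -/
def LebPoint (μ : Measure X) (p : ℝ) (u : X → EReal) (x : X) : Prop :=
  Tendsto (fun r : ℝ => avg μ (Metric.ball x r) fun y => ((u y - u x).abs) ^ p)
    (𝓝[>] (0 : ℝ)) (𝓝 0)

/-- `u` is quasicontinuous on `X`. -/
def Quasicontinuous (μ : Measure X) (p : ℝ) (u : X → EReal) : Prop :=
  ∀ ε : ℝ≥0∞, 0 < ε → ∃ G : Set X, IsOpen G ∧ capacity μ p G < ε ∧
    (∀ x, x ∉ G → u x ≠ ⊤ ∧ u x ≠ ⊥) ∧ ContinuousOn u Gᶜ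

/-- Positive distance between two sets (vacuously true if `E = ∅`). -/
def distPos (G E : Set X) : Prop :=
  ∃ δ : ℝ, 0 < δ ∧ ∀ x ∈ G, ∀ y ∈ E, δ ≤ dist x y

/-- The family `G_dist(Ω)` of bounded open `G ⊆ Ω` with `dist(G, X∖Ω) > 0`. -/
def Gdist (Ω : Set X) : Set (Set X) :=
  {G | IsOpen G ∧ Bornology.IsBounded G ∧ G ⊆ Ω ∧ distPos G Ωᶜ}

/-- `φ ∈ N^{1,p}_0(G)` (extended by zero outside `G`). -/
def MemN0 (μ : Measure X) (p : ℝ) (G : Set X) (φ : X → EReal) : Prop :=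
  MemNp μ p Set.univ φ ∧ ∀ x, x ∉ G → φ x = 0

/-- `φ ∈ N^{1,p}_{0,dist}(Ω)`: the closure in `N^{1,p}(X)` of the functions
vanishing outside some `G ∈ G_dist(Ω)`. -/
def MemN0dist (μ : Measure X) (p : ℝ) (Ω : Set X) (φ : X → EReal) : Prop :=
  MemNp μ p Set.univ φ ∧
    ∀ ε : ℝ≥0∞, 0 < ε → ∃ ψ : X → EReal, (∃ G ∈ Gdist Ω, MemN0 μ p G ψ) ∧
      npEnergy μ p Set.univ (fun x => φ x - ψ x) < ε

/-- `u` is a `Q`-quasiminimizer in `Ω`, tested by `φ ∈ N^{1,p}_{0,dist}(Ω)`. -/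
def QuasiMinimizerDist (μ : Measure X) (p Q : ℝ) (Ω : Set X) (u : X → EReal) : Prop :=
  ∀ φ : X → EReal, MemN0dist μ p Ω φ →
    ∀ gu gv : X → ℝ≥0∞, IsMinimalWUG μ p Ω u gu →
      IsMinimalWUG μ p Ω (fun x => u x + φ x) gv →
      (∫⁻ x in {x ∈ Ω | φ x ≠ 0}, gu x ^ p ∂μ) ≤
        ENNReal.ofReal Q * ∫⁻ x in {x ∈ Ω | φ x ≠ 0}, gv x ^ p ∂μ

/-- `u` is a `Q`-quasisuperminimizer in `Ω`, tested by nonnegative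
`φ ∈ N^{1,p}_{0,dist}(Ω)`. -/
def QuasiSuperminimizerDist (μ : Measure X) (p Q : ℝ) (Ω : Set X) (u : X → EReal) : Prop :=
  ∀ φ : X → EReal, MemN0dist μ p Ω φ → (∀ x, 0 ≤ φ x) →
    ∀ gu gv : X → ℝ≥0∞, IsMinimalWUG μ p Ω u gu →
      IsMinimalWUG μ p Ω (fun x => u x + φ x) gv →
      (∫⁻ x in {x ∈ Ω | φ x ≠ 0}, gu x ^ p ∂μ) ≤
        ENNReal.ofReal Q * ∫⁻ x in {x ∈ Ω | φ x ≠ 0}, gv x ^ p ∂μ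

/-- `ess liminf_{y → x} v(y)` (with respect to `μ`). -/
def essLiminfAt (μ : Measure X) (v : X → EReal) (x : X) : EReal :=
  ⨆ (r : ℝ) (_ : 0 < r), essInf v (μ.restrict (Metric.ball x r))

/-- `v` is lsc-regularized on `Ω`. -/
def LscRegularizedOn (μ : Measure X) (v : X → EReal) (Ω : Set X) : Prop :=
  ∀ x ∈ Ω, v x = essLiminfAt (μ.restrict Ω) v x

/-- The nonnegative part of an extended real, as an element of `ℝ≥0∞`. -/
def erealPos (x : EReal) : ℝ≥0∞ := if x = ⊤ then ⊤ else ENNReal.ofReal x.toReal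

/-- The integral average `⨍_S u dμ` of an `ℝ̄`-valued function. -/
def erealAvg (μ : Measure X) (S : Set X) (u : X → EReal) : EReal :=
  (((∫⁻ x in S, erealPos (u x) ∂μ) / μ S : ℝ≥0∞) : EReal) -
    (((∫⁻ x in S, erealPos (-(u x)) ∂μ) / μ S : ℝ≥0∞) : EReal)

/-- `Ω^∧ = X̂ ∖ cl_{X̂}(X ∖ Ω)`, the largest open subset of the completion `X̂`
with `Ω^∧ ∩ X = Ω`. -/
def hatSet (Ω : Set X) : Set (Completion X) :=
  (closure (((↑) : X → Completion X) '' Ωᶜ))ᶜ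

/-- The function `x ↦ limsup_{r → 0} ⨍_{B̂(x,r) ∩ X} u dμ` on the completion. -/
def hatLimsupExt (μ : Measure X) (u : X → EReal) : Completion X → EReal :=
  fun x => limsup
    (fun r : ℝ => erealAvg μ (((↑) : X → Completion X) ⁻¹' Metric.ball x r) u)
    (𝓝[>] (0 : ℝ))

/-!
A ball `B̂(x, r)` of the completion meets `X` in a set `S` which need not be a ball of `X`, but
which is exhausted (not monotonically) by the balls `B(z n, r - ε n)` of `X`, where `z n → x` and
`ε n = d(z n, x)`; likewise the balls `B(z n, λ (r - ε n))` exhaust the trace of `λB̂`. The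
Poincaré inequality of `X` holds on these balls. Since `μ̂` is the push-forward of `μ` and upper
gradients on `X̂` restrict to upper gradients on `X` along curves, it is an inequality between
quantities on `X`, and it passes to the limit: the measures and mean values over the small
balls converge (Fatou, dominated convergence), and the enlarged balls eventually carry half the
measure of their limit. Each of these two steps costs a factor `2`, giving the constant `4C`.
-/

theorem ofReal_abs_sub_rpow_le {q : ℝ} (hq : 0 ≤ q) (a b c : ℝ) :
    ENNReal.ofReal |a - c| ^ q
      ≤ 2 ^ q * (ENNReal.ofReal |a - b| ^ q + ENNReal.ofReal |b - c| ^ q) := by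
  set x := ENNReal.ofReal |a - b|
  set y := ENNReal.ofReal |b - c|
  have htri : ENNReal.ofReal |a - c| ≤ 2 * max x y := calc
    ENNReal.ofReal |a - c| ≤ x + y := (ENNReal.ofReal_le_ofReal (abs_sub_le a b c)).trans
      ENNReal.ofReal_add_le
    _ ≤ max x y + max x y := add_le_add (le_max_left x y) (le_max_right x y)
    _ = 2 * max x y := (two_mul _).symm
  have hmax : max x y ^ q ≤ x ^ q + y ^ q := by
    rcases le_total x y with h | h
    · simp [max_eq_right h]
    · simp [max_eq_left h]
  calc ENNReal.ofReal |a - c| ^ q ≤ (2 * max x y) ^ q := ENNReal.rpow_le_rpow htri hq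
    _ = 2 ^ q * max x y ^ q := ENNReal.mul_rpow_of_nonneg _ _ hq
    _ ≤ 2 ^ q * (x ^ q + y ^ q) := by gcongr

section InnerApprox

variable {α : Type*}

structure IsInnerApprox (B : ℕ → Set α) (S : Set α) : Prop where
  subset : ∀ n, B n ⊆ S
  eventually_mem : ∀ y ∈ S, ∀ᶠ n in atTop, y ∈ B n

variable [MeasurableSpace α] {μ : Measure α} {B : ℕ → Set α} {S : Set α}

theorem setLIntegral_le_of_avg_rpow_le {s : Set α} {F : α → ℝ≥0∞} {q : ℝ} (hq : 0 < q)
    {M : ℝ≥0∞} (hs : μ s ≠ ∞) (h : avg μ s F ^ (1 / q) ≤ M) :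
    ∫⁻ y in s, F y ∂μ ≤ M ^ q * μ s := by
  rcases eq_or_ne (μ s) 0 with hs0 | hs0
  · simp [setLIntegral_measure_zero _ _ hs0]
  rwa [one_div, ENNReal.rpow_inv_le_iff hq, avg, ENNReal.div_le_iff hs0 hs] at h

theorem avg_rpow_le_of_setLIntegral_le {s : Set α} {F : α → ℝ≥0∞} {q : ℝ} (hq : 0 < q)
    {M : ℝ≥0∞} (h : ∫⁻ y in s, F y ∂μ ≤ M ^ q * μ s) :
    avg μ s F ^ (1 / q) ≤ M := by
  rw [one_div, ENNReal.rpow_inv_le_iff hq]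
  exact ENNReal.div_le_of_le_mul h

namespace IsInnerApprox

theorem setLIntegral_le_liminf (hB : IsInnerApprox B S) (hBm : ∀ n, MeasurableSet (B n))
    (hSm : MeasurableSet S) {f : α → ℝ≥0∞} (hf : AEMeasurable f (μ.restrict S)) :
    ∫⁻ y in S, f y ∂μ ≤ liminf (fun n => ∫⁻ y in B n, f y ∂μ) atTop := by
  have hind : ∀ n, ∫⁻ y in B n, f y ∂μ = ∫⁻ y, (B n).indicator f y ∂μ.restrict S := fun n => by
    rw [lintegral_indicator (hBm n), Measure.restrict_restrict_of_subset (hB.subset n)]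
  have hlim : ∀ᵐ y ∂μ.restrict S, f y = liminf (fun n => (B n).indicator f y) atTop := by
    filter_upwards [ae_restrict_mem hSm] with y hy
    refine (liminf_congr ?_).trans (liminf_const (f y)) |>.symm
    exact (hB.eventually_mem y hy).mono fun n hn => indicator_of_mem hn f
  calc ∫⁻ y in S, f y ∂μ
      = ∫⁻ y, liminf (fun n => (B n).indicator f y) atTop ∂μ.restrict S := lintegral_congr_ae hlim
    _ ≤ liminf (fun n => ∫⁻ y, (B n).indicator f y ∂μ.restrict S) atTop :=
      lintegral_liminf_le' fun n => hf.indicator (hBm n)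
    _ = liminf (fun n => ∫⁻ y in B n, f y ∂μ) atTop := by simp_rw [hind]

theorem tendsto_measure (hB : IsInnerApprox B S) (hBm : ∀ n, MeasurableSet (B n))
    (hSm : MeasurableSet S) : Tendsto (fun n => μ (B n)) atTop (𝓝 (μ S)) := by
  refine tendsto_of_le_liminf_of_limsup_le ?_ ?_
  · simpa using hB.setLIntegral_le_liminf hBm hSm (μ := μ) aemeasurable_const (f := fun _ => 1)
  · exact limsup_le_of_le (by isBoundedDefault)
      (Eventually.of_forall fun n => measure_mono (hB.subset n))

theorem tendsto_setIntegral (hB : IsInnerApprox B S) (hBm : ∀ n, MeasurableSet (B n))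
    (hSm : MeasurableSet S) {v : α → ℝ} (hv : IntegrableOn v S μ) :
    Tendsto (fun n => ∫ y in B n, v y ∂μ) atTop (𝓝 (∫ y in S, v y ∂μ)) := by
  have hind : ∀ n, ∫ y in B n, v y ∂μ = ∫ y, (B n).indicator v y ∂μ.restrict S := fun n => by
    rw [integral_indicator (hBm n), Measure.restrict_restrict_of_subset (hB.subset n)]
  simp_rw [hind]
  refine tendsto_integral_of_dominated_convergence (fun y => ‖v y‖)
    (fun n => hv.aestronglyMeasurable.indicator (hBm n)) hv.norm
    (fun n => ae_of_all _ (norm_indicator_le_norm_self v)) ?_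
  filter_upwards [ae_restrict_mem hSm] with y hy
  exact tendsto_const_nhds.congr' <|
    (hB.eventually_mem y hy).mono fun n hn => (indicator_of_mem hn v).symm

theorem tendsto_setAverage (hB : IsInnerApprox B S) (hBm : ∀ n, MeasurableSet (B n))
    (hSm : MeasurableSet S) (hS0 : μ S ≠ 0) (hSfin : μ S ≠ ∞) {v : α → ℝ}
    (hv : IntegrableOn v S μ) :
    Tendsto (fun n => ⨍ y in B n, v y ∂μ) atTop (𝓝 (⨍ y in S, v y ∂μ)) := by
  simp_rw [setAverage_eq, measureReal_def]
  exact (((ENNReal.tendsto_toReal hSfin).comp (hB.tendsto_measure hBm hSm)).inv₀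
    (ENNReal.toReal_ne_zero.2 ⟨hS0, hSfin⟩)).smul (hB.tendsto_setIntegral hBm hSm hv)

theorem setLIntegral_rpow_abs_sub_le (hB : IsInnerApprox B S) (hBm : ∀ n, MeasurableSet (B n))
    (hSm : MeasurableSet S) (hSfin : μ S ≠ ∞) {q : ℝ} (hq : 0 < q) {v : α → ℝ}
    (hv : AEMeasurable v (μ.restrict S)) {c : ℕ → ℝ} {c₀ : ℝ} (hc : Tendsto c atTop (𝓝 c₀))
    {A : ℝ≥0∞} (hA : ∀ᶠ n in atTop, ∫⁻ y in B n, ENNReal.ofReal |v y - c n| ^ q ∂μ ≤ A) :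
    ∫⁻ y in S, ENNReal.ofReal |v y - c₀| ^ q ∂μ ≤ 2 ^ q * A := by
  set err : ℕ → ℝ≥0∞ := fun n => ENNReal.ofReal |c n - c₀| ^ q * μ S
  have herr : Tendsto err atTop (𝓝 0) := by
    have h := ENNReal.tendsto_ofReal (hc.sub_const c₀).abs
    have h' := (ENNReal.continuous_rpow_const (y := q)).tendsto _ |>.comp h
    simpa [ENNReal.zero_rpow_of_pos hq, Function.comp_def] using
      ENNReal.Tendsto.mul_const h' (Or.inr hSfin)
  have hbound : ∀ᶠ n in atTop,
      ∫⁻ y in B n, ENNReal.ofReal |v y - c₀| ^ q ∂μ ≤ 2 ^ q * (A + err n) := by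
    filter_upwards [hA] with n hn
    calc ∫⁻ y in B n, ENNReal.ofReal |v y - c₀| ^ q ∂μ
        ≤ ∫⁻ y in B n, 2 ^ q * (ENNReal.ofReal |v y - c n| ^ q
            + ENNReal.ofReal |c n - c₀| ^ q) ∂μ :=
          lintegral_mono fun y => ofReal_abs_sub_rpow_le hq.le _ _ _
      _ = 2 ^ q * (∫⁻ y in B n, ENNReal.ofReal |v y - c n| ^ q ∂μ
            + ENNReal.ofReal |c n - c₀| ^ q * μ (B n)) := by
          rw [lintegral_const_mul' _ _ (by simp), lintegral_add_right _ measurable_const,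
            setLIntegral_const]
      _ ≤ 2 ^ q * (A + err n) := by
          simp only [err]
          gcongr
          exact hB.subset n
  have hmeas : AEMeasurable (fun y => ENNReal.ofReal |v y - c₀| ^ q) (μ.restrict S) := by
    fun_prop
  calc ∫⁻ y in S, ENNReal.ofReal |v y - c₀| ^ q ∂μ
      ≤ liminf (fun n => ∫⁻ y in B n, ENNReal.ofReal |v y - c₀| ^ q ∂μ) atTop :=
        hB.setLIntegral_le_liminf hBm hSm hmeas
    _ ≤ liminf (fun n => 2 ^ q * (A + err n)) atTop := liminf_le_liminf hbound
    _ = 2 ^ q * A := by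
        simpa using (ENNReal.Tendsto.const_mul (tendsto_const_nhds.add herr)
          (Or.inr (by simp))).liminf_eq

theorem poincare {L : ℕ → Set α} {T : Set α} (hB : IsInnerApprox B S) (hL : IsInnerApprox L T)
    (hBm : ∀ n, MeasurableSet (B n)) (hLm : ∀ n, MeasurableSet (L n)) (hSm : MeasurableSet S)
    (hTm : MeasurableSet T) (hS0 : μ S ≠ 0) (hSfin : μ S ≠ ∞) (hT0 : μ T ≠ 0) (hTfin : μ T ≠ ∞)
    {q p : ℝ} (hq : 0 < q) (hp : 1 ≤ p) {v : α → ℝ} (hv : IntegrableOn v S μ)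
    {g : α → ℝ≥0∞} {K : ℝ≥0∞}
    (hPI : ∀ᶠ n in atTop, avg μ (B n) (fun y => ENNReal.ofReal |v y - ravg μ (B n) v| ^ q) ^ (1 / q)
      ≤ K * avg μ (L n) (fun y => g y ^ p) ^ (1 / p)) :
    avg μ S (fun y => ENNReal.ofReal |v y - ravg μ S v| ^ q) ^ (1 / q)
      ≤ 4 * K * avg μ T (fun y => g y ^ p) ^ (1 / p) := by
  have hp' : 0 ≤ 1 / p := by positivity
  set E := avg μ T fun y => g y ^ p
  have hLavg : ∀ᶠ n in atTop, avg μ (L n) (fun y => g y ^ p) ≤ 2 * E := by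
    have hhalf : ∀ᶠ n in atTop, μ T / 2 < μ (L n) :=
      (hL.tendsto_measure hLm hTm).eventually (lt_mem_nhds (ENNReal.half_lt_self hT0 hTfin))
    filter_upwards [hhalf] with n hn
    refine ENNReal.div_le_of_le_mul ?_
    calc ∫⁻ y in L n, g y ^ p ∂μ ≤ ∫⁻ y in T, g y ^ p ∂μ := lintegral_mono_set (hL.subset n)
      _ = E * μ T := (ENNReal.div_mul_cancel hT0 hTfin).symm
      _ ≤ E * (μ (L n) * 2) := by
          gcongr
          exact (ENNReal.div_le_iff two_ne_zero ENNReal.ofNat_ne_top).1 hn.le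
      _ = 2 * E * μ (L n) := by ring
  have hBbound : ∀ᶠ n in atTop,
      ∫⁻ y in B n, ENNReal.ofReal |v y - ravg μ (B n) v| ^ q ∂μ
        ≤ (K * (2 * E) ^ (1 / p)) ^ q * μ S := by
    filter_upwards [hPI, hLavg] with n hn hn'
    calc _ ≤ (K * avg μ (L n) (fun y => g y ^ p) ^ (1 / p)) ^ q * μ (B n) :=
          setLIntegral_le_of_avg_rpow_le hq
            (ne_top_of_le_ne_top hSfin (measure_mono (hB.subset n))) hn
      _ ≤ (K * (2 * E) ^ (1 / p)) ^ q * μ S := by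
          gcongr
          exact hB.subset n
  have hS := hB.setLIntegral_rpow_abs_sub_le hBm hSm hSfin hq hv.aemeasurable
    (hB.tendsto_setAverage hBm hSm hS0 hSfin hv) hBbound
  refine (avg_rpow_le_of_setLIntegral_le hq (M := 2 * (K * (2 * E) ^ (1 / p))) ?_).trans ?_
  · rwa [ENNReal.mul_rpow_of_nonneg _ _ hq.le, mul_assoc]
  have htwo : (2 : ℝ≥0∞) ^ (1 / p) ≤ 2 := by
    simpa using ENNReal.rpow_le_rpow_of_exponent_le one_le_two
      ((div_le_one (by linarith)).2 hp)
  calc 2 * (K * (2 * E) ^ (1 / p)) = 2 * K * (2 ^ (1 / p) * E ^ (1 / p)) := by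
        rw [ENNReal.mul_rpow_of_nonneg _ _ hp']; ring
    _ ≤ 2 * K * (2 * E ^ (1 / p)) := by gcongr
    _ = 4 * K * E ^ (1 / p) := by ring

end IsInnerApprox

end InnerApprox

section Isometry

variable {α β : Type*} [PseudoMetricSpace α] [PseudoMetricSpace β] {f : α → β}

theorem preimage_ball_subset_ball_of_isometry (hf : Isometry f) (y : β) (R : ℝ) (w : α) :
    f ⁻¹' ball y R ⊆ ball w (R + dist (f w) y) := by
  intro a ha
  rw [mem_preimage, mem_ball] at ha
  rw [mem_ball, ← hf.dist_eq]
  linarith [dist_triangle_right (f a) (f w) y]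

theorem isInnerApprox_preimage_ball_of_isometry (hf : Isometry f) {z : ℕ → α} {y : β}
    {ε : ℕ → ℝ} (hz : ∀ n, dist (f (z n)) y ≤ ε n) (hε : Tendsto ε atTop (𝓝 0)) (R : ℝ) :
    IsInnerApprox (fun n => ball (z n) (R - ε n)) (f ⁻¹' ball y R) where
  subset n a ha := by
    rw [mem_ball, ← hf.dist_eq] at ha
    rw [mem_preimage, mem_ball]
    linarith [dist_triangle (f a) (f (z n)) y, hz n]
  eventually_mem a ha := by
    rw [mem_preimage, mem_ball] at ha
    filter_upwards [hε.eventually (gt_mem_nhds (half_pos (sub_pos.2 ha)))] with n hn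
    rw [mem_ball, ← hf.dist_eq]
    linarith [dist_triangle_right (f a) (f (z n)) y, hz n]

end Isometry

def Curve.map {α β : Type*} [MetricSpace α] [MetricSpace β] {f : α → β} (hf : Isometry f)
    (γ : Curve α) : Curve β where
  len := γ.len
  len_pos := γ.len_pos
  toFun := f ∘ γ.toFun
  lip := by simpa using hf.lipschitz.comp_lipschitzOnWith γ.lip
  nonconst := let ⟨t, ht, hne⟩ := γ.nonconst; ⟨t, ht, hf.injective.ne hne⟩

theorem IsUpperGradOn.comp_isometry {α β : Type*} [MetricSpace α] [MeasurableSpace α]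
    [MetricSpace β] [MeasurableSpace β] {f : α → β} (hf : Isometry f) (hfm : Measurable f)
    {u : β → EReal} {g : β → ℝ≥0∞} {E : Set α} {F : Set β} (hg : IsUpperGradOn u g F)
    (hEF : MapsTo f E F) : IsUpperGradOn (u ∘ f) (g ∘ f) E :=
  ⟨hg.1.comp ((hfm.comp measurable_subtype_coe).subtype_mk (h := fun a => hEF a.2)),
    fun γ hγ => hg.2 (γ.map hf) fun t ht => hEF (hγ t ht)⟩

section Pushforward

variable {α β : Type*} [MeasurableSpace α] [MeasurableSpace β] {μ : Measure α} {f : α → β}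

theorem avg_map (hf : Measurable f) {s : Set β} (hs : MeasurableSet s) {F : β → ℝ≥0∞}
    (hF : AEMeasurable F ((μ.map f).restrict s)) :
    avg (μ.map f) s F = avg μ (f ⁻¹' s) (F ∘ f) := by
  rw [Measure.restrict_map hf hs] at hF
  rw [avg, avg, Measure.map_apply hf hs, Measure.restrict_map hf hs,
    lintegral_map' hF hf.aemeasurable]
  rfl

theorem ravg_map (hf : Measurable f) {s : Set β} (hs : MeasurableSet s) {u : β → ℝ}
    (hu : AEStronglyMeasurable u ((μ.map f).restrict s)) :
    ravg (μ.map f) s u = ravg μ (f ⁻¹' s) (u ∘ f) := by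
  rw [Measure.restrict_map hf hs] at hu
  rw [ravg, ravg, setAverage_eq, setAverage_eq, measureReal_def, measureReal_def,
    Measure.map_apply hf hs, Measure.restrict_map hf hs, integral_map hf.aemeasurable hu]
  rfl

end Pushforward

section BallCond

variable {α β : Type*} [MetricSpace α] [MeasurableSpace α] [PseudoMetricSpace β]
  {μ : Measure α} {f : α → β}

theorem BallCond.measure_preimage_ball_pos (hμ : BallCond μ) (hf : Isometry f)
    (hfd : DenseRange f) (x : β) {r : ℝ} (hr : 0 < r) : 0 < μ (f ⁻¹' ball x r) := by
  obtain ⟨w, hw⟩ := hfd.exists_dist_lt x (half_pos hr)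
  refine (hμ w (r / 2) (half_pos hr)).1.trans_le (measure_mono fun a ha => ?_)
  rw [mem_ball, ← hf.dist_eq] at ha
  rw [mem_preimage, mem_ball]
  linarith [dist_triangle (f a) (f w) x, dist_comm x (f w)]

theorem BallCond.measure_preimage_ball_lt_top (hμ : BallCond μ) (hf : Isometry f) (x : β)
    {r : ℝ} (hr : 0 < r) : μ (f ⁻¹' ball x r) < ∞ := by
  rcases isEmpty_or_nonempty α with hα | ⟨⟨w⟩⟩
  · simp [Set.eq_empty_of_isEmpty]
  exact (measure_mono (preimage_ball_subset_ball_of_isometry hf x r w)).trans_lt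
    (hμ w _ (by positivity)).2

end BallCond

theorem PoincareWithin.map_isometry {α β : Type*} [MetricSpace α] [MeasurableSpace α]
    [OpensMeasurableSpace α] [MetricSpace β] [MeasurableSpace β] [BorelSpace β]
    {μ : Measure α} (hμ : BallCond μ) {f : α → β} (hf : Isometry f) (hfd : DenseRange f)
    {q p C lam : ℝ} (hq : 0 < q) (hp : 1 ≤ p) (hC : 0 ≤ C) (hlam : 1 ≤ lam) {y₀ : α} {R : ℝ}
    (hPI : PoincareWithin μ q p C lam y₀ R) {x₀ : β} {r₀ : ℝ}
    (hR : f ⁻¹' ball x₀ r₀ ⊆ ball y₀ R) :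
    PoincareWithin (μ.map f) q p (4 * C) lam x₀ r₀ := by
  intro x r hr hball u g hu hg
  have hfm : Measurable f := hf.continuous.measurable
  obtain ⟨w, hw, hwx⟩ := mem_closure_iff_seq_limit.1 (hfd x)
  choose z hz using hw
  set ε : ℕ → ℝ := fun n => dist (f (z n)) x
  have hε : Tendsto ε atTop (𝓝 0) := tendsto_iff_dist_tendsto_zero.1 (by simpa [hz] using hwx)
  have hB := isInnerApprox_preimage_ball_of_isometry hf (fun n => le_rfl) hε r
  have hL : IsInnerApprox (fun n => ball (z n) (lam * (r - ε n))) (f ⁻¹' ball x (lam * r)) := by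
    simpa only [mul_sub] using isInnerApprox_preimage_ball_of_isometry hf (ε := fun n => lam * ε n)
      (fun n => le_mul_of_one_le_left dist_nonneg hlam) (by simpa using hε.const_mul lam) (lam * r)
  have hST : f ⁻¹' ball x r ⊆ f ⁻¹' ball x (lam * r) :=
    preimage_mono (ball_subset_ball (le_mul_of_one_le_left hr.le hlam))
  have hS0 := hμ.measure_preimage_ball_pos hf hfd x hr
  have hTfin := hμ.measure_preimage_ball_lt_top hf x (r := lam * r) (by nlinarith)
  have hu' : IntegrableOn (u ∘ f) (f ⁻¹' ball x (lam * r)) μ := by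
    rw [IntegrableOn, Measure.restrict_map hfm measurableSet_ball] at hu
    exact (integrable_map_measure hu.1 hfm.aemeasurable).1 hu
  have hur := (hu.mono_set (ball_subset_ball (le_mul_of_one_le_left hr.le hlam))).1
  rw [ravg_map hfm measurableSet_ball hur, avg_map hfm measurableSet_ball (by fun_prop),
    avg_map hfm measurableSet_ball
      ((aemeasurable_restrict_of_measurable_subtype measurableSet_ball hg.1).pow_const p),
    show ENNReal.ofReal (4 * C * r) = 4 * ENNReal.ofReal (C * r) by
      rw [mul_assoc, ENNReal.ofReal_mul (by norm_num), ENNReal.ofReal_ofNat]]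
  refine hB.poincare hL (v := u ∘ f) (g := g ∘ f) (fun n => measurableSet_ball)
    (fun n => measurableSet_ball) (hfm measurableSet_ball) (hfm measurableSet_ball) hS0.ne'
    (ne_top_of_le_ne_top hTfin.ne (measure_mono hST)) (hS0.trans_le (measure_mono hST)).ne'
    hTfin.ne hq hp (hu'.mono_set hST) ?_
  filter_upwards [hε.eventually (gt_mem_nhds hr)] with n hn
  refine (hPI (z n) (r - ε n) (sub_pos.2 hn) ((hB.subset n).trans ((preimage_mono hball).trans hR))
    (u ∘ f) (g ∘ f) (hu'.mono_set (hL.subset n)) (hg.comp_isometry hf hfm (hL.subset n))).trans ?_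
  gcongr
  linarith [dist_nonneg (x := f (z n)) (y := x)]

/-- If `X` supports a semilocal `(q,p)`-Poincaré inequality, then so
does its completion `X̂` (with the extended measure). -/
theorem statement4 {X : Type u} [MetricSpace X] [MeasurableSpace X] [BorelSpace X]
    [MeasurableSpace (Completion X)] [BorelSpace (Completion X)]
    (μ : Measure X) (hμ : BallCond μ)
    (q p : ℝ) (hq : 1 ≤ q) (hp : 1 ≤ p)
    (h : SemilocalPoincare μ q p) :
    SemilocalPoincare (μ.map ((↑) : X → Completion X)) q p := by
  intro x₀ r₀ hr₀
  obtain ⟨y₀, hy₀⟩ := Completion.denseRange_coe.exists_dist_lt x₀ hr₀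
  obtain ⟨C, hC, lam, hlam, hPI⟩ := h y₀ (2 * r₀) (by positivity)
  refine ⟨4 * C, by positivity, lam, hlam, hPI.map_isometry hμ Completion.coe_isometry
    Completion.denseRange_coe (by linarith) hp hC.le hlam ?_⟩
  refine (preimage_ball_subset_ball_of_isometry Completion.coe_isometry x₀ r₀ y₀).trans
    (ball_subset_ball ?_)
  rw [dist_comm]
  linarith

end Paper
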